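/- Let P, P', D be positive natural numbers, let μ be a probability measure on ℝ^P (vectors x regarded as row vectors) with square-integrable coordinates and identity uncentered covariance, ∫ x_i x_j dμ(x) = δ_{ij} for all i, j. Let A ∈ ℝ^{P×P'}, δ > 0, and θ ∈ ℝ^{P×D}. Then: (i) for every θ' ∈ ℝ^{P'×D}, ∫ ‖x·θ − δ·(x·A)·θ'‖² dμ(x) = ‖θ − δ·A·θ'‖_F²; consequently (ii) a matrix θ' minimizes the expected loss θ'' ↦ ∫ ‖x·θ − δ·(x·A)·θ''‖² dμ(x) if and only if it minimizes θ'' ↦ ‖θ − δ·A·θ''‖_F²; and (iii) if additionally the columns of A are linearly independent, the unique minimizer of both objectives is θ' = δ⁻¹(AᵀA)⁻¹Aᵀθ. -/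

import Mathlib

open Matrix MeasureTheory

/-- Squared Frobenius norm of a real matrix. -/
noncomputable def frobNormSq {m n : ℕ} (M : Matrix (Fin m) (Fin n) ℝ) : ℝ :=
  ∑ i, ∑ j, (M i j) ^ 2


lemma frob_nonneg {m n : ℕ} (M : Matrix (Fin m) (Fin n) ℝ) : 0 ≤ frobNormSq M :=
  Finset.sum_nonneg fun _ _ => Finset.sum_nonneg fun _ _ => sq_nonneg _

lemma frob_eq_zero {m n : ℕ} (M : Matrix (Fin m) (Fin n) ℝ)
    (h : frobNormSq M = 0) : M = 0 := by
  ext i j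
  have h1 : ∀ i ∈ Finset.univ, (0:ℝ) ≤ ∑ j, (M i j)^2 :=
    fun _ _ => Finset.sum_nonneg fun _ _ => sq_nonneg _
  have h2 := (Finset.sum_eq_zero_iff_of_nonneg h1).mp h i (Finset.mem_univ i)
  have h3 := (Finset.sum_eq_zero_iff_of_nonneg
    (fun j _ => sq_nonneg (M i j))).mp h2 j (Finset.mem_univ j)
  simpa using pow_eq_zero_iff (n := 2) (by norm_num) |>.mp h3


lemma frob_min_iff {P P' D : ℕ}
    (A : Matrix (Fin P) (Fin P') ℝ) (hA : IsUnit (Aᵀ * A).det)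
    (δ : ℝ) (hδ : 0 < δ) (θ : Matrix (Fin P) (Fin D) ℝ)
    (θ' : Matrix (Fin P') (Fin D) ℝ) :
    (∀ θ'' : Matrix (Fin P') (Fin D) ℝ,
        frobNormSq (θ - δ • (A * θ')) ≤ frobNormSq (θ - δ • (A * θ''))) ↔
      θ' = δ⁻¹ • ((Aᵀ * A)⁻¹ * Aᵀ * θ) := by
  set θs : Matrix (Fin P') (Fin D) ℝ := δ⁻¹ • ((Aᵀ * A)⁻¹ * Aᵀ * θ) with hθs
  have hAX : Aᵀ * (θ - δ • (A * θs)) = 0 := by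
    have h1 : Aᵀ * (δ • (A * θs)) = Aᵀ * θ := by
      simp only [hθs, Matrix.mul_smul, Matrix.smul_mul, smul_smul,
        mul_inv_cancel₀ (ne_of_gt hδ), one_smul]
      calc Aᵀ * (A * ((Aᵀ * A)⁻¹ * Aᵀ * θ))
          = (Aᵀ * A) * (Aᵀ * A)⁻¹ * (Aᵀ * θ) := by
            simp only [Matrix.mul_assoc]
        _ = Aᵀ * θ := by rw [Matrix.mul_nonsing_inv _ hA, Matrix.one_mul]
    rw [Matrix.mul_sub, h1, sub_self]
  have hdec : ∀ θ'' : Matrix (Fin P') (Fin D) ℝ,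
      θ - δ • (A * θ'') = (θ - δ • (A * θs)) + δ • (A * (θs - θ'')) := by
    intro θ''
    rw [Matrix.mul_sub, smul_sub]
    abel
  have hcross : ∀ Z : Matrix (Fin P') (Fin D) ℝ,
      ∑ i, ∑ j, (θ - δ • (A * θs)) i j * (A * Z) i j = 0 := by
    intro Z
    have key : ∀ j : Fin D, ∑ i, (θ - δ • (A * θs)) i j * (A * Z) i j = 0 := by
      intro j
      calc ∑ i, (θ - δ • (A * θs)) i j * (A * Z) i j
          = ∑ i, ∑ k, A i k * (θ - δ • (A * θs)) i j * Z k j := by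
            refine Finset.sum_congr rfl fun i _ => ?_
            rw [Matrix.mul_apply, Finset.mul_sum]
            exact Finset.sum_congr rfl fun k _ => by ring
        _ = ∑ k, ∑ i, A i k * (θ - δ • (A * θs)) i j * Z k j := Finset.sum_comm
        _ = ∑ k, (Aᵀ * (θ - δ • (A * θs))) k j * Z k j := by
            refine Finset.sum_congr rfl fun k _ => ?_
            rw [Matrix.mul_apply, Finset.sum_mul]
            exact Finset.sum_congr rfl fun i _ => by simp [Matrix.transpose_apply]
        _ = 0 := by rw [hAX]; simp
    rw [Finset.sum_comm]
    exact Finset.sum_eq_zero fun j _ => key j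
  have hexp : ∀ θ'' : Matrix (Fin P') (Fin D) ℝ,
      frobNormSq (θ - δ • (A * θ'')) =
        frobNormSq (θ - δ • (A * θs)) + δ^2 * frobNormSq (A * (θs - θ'')) := by
    intro θ''
    rw [hdec θ'']
    have hc := hcross (θs - θ'')
    calc frobNormSq ((θ - δ • (A * θs)) + δ • (A * (θs - θ'')))
        = ∑ i, ∑ j, ((θ - δ • (A * θs)) i j ^ 2
            + (2*δ) * ((θ - δ • (A * θs)) i j * (A * (θs - θ'')) i j)
            + δ^2 * (A * (θs - θ'')) i j ^ 2) := by
          refine Finset.sum_congr rfl fun i _ => Finset.sum_congr rfl fun j _ => ?_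
          simp only [Matrix.add_apply, Matrix.smul_apply, smul_eq_mul]
          ring
      _ = frobNormSq (θ - δ • (A * θs))
            + (2*δ) * (∑ i, ∑ j, (θ - δ • (A * θs)) i j * (A * (θs - θ'')) i j)
            + δ^2 * frobNormSq (A * (θs - θ'')) := by
          simp only [frobNormSq, Finset.sum_add_distrib, ← Finset.mul_sum]
      _ = frobNormSq (θ - δ • (A * θs)) + δ^2 * frobNormSq (A * (θs - θ'')) := by
          rw [hc]; ring
  constructor
  · intro hmin
    have h1 := hmin θs
    rw [hexp θ'] at h1
    have h3 : frobNormSq (A * (θs - θ')) = 0 := by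
      nlinarith [frob_nonneg (A * (θs - θ')), pow_pos hδ 2]
    have h4 : A * (θs - θ') = 0 := frob_eq_zero _ h3
    have h5 : (Aᵀ * A) * (θs - θ') = 0 := by
      rw [Matrix.mul_assoc, h4, Matrix.mul_zero]
    have h6 : θs - θ' = 0 := by
      have := congrArg (fun M => (Aᵀ * A)⁻¹ * M) h5
      simpa [← Matrix.mul_assoc, Matrix.nonsing_inv_mul _ hA] using this
    exact (sub_eq_zero.mp h6).symm
  · intro h
    subst h
    intro θ''
    rw [hexp θ'']
    have := frob_nonneg (A * (θs - θ''))
    nlinarith [sq_nonneg δ]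

lemma integral_eq_frob {P D : ℕ} (μ : Measure (Fin P → ℝ)) [IsProbabilityMeasure μ]
    (hL2 : ∀ i : Fin P, MemLp (fun x : Fin P → ℝ => x i) 2 μ)
    (hcov : ∀ i j : Fin P, (∫ x, x i * x j ∂μ) = if i = j then (1 : ℝ) else 0)
    (B : Matrix (Fin P) (Fin D) ℝ) :
    ∫ x, (∑ d, (∑ i, x i * B i d) ^ 2) ∂μ = frobNormSq B := by
  have hmul : ∀ i j : Fin P, Integrable (fun x : Fin P → ℝ => x i * x j) μ := by
    intro i j
    have h1 : Integrable (fun x : Fin P → ℝ => (x i + x j) ^ 2) μ := by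
      have := ((hL2 i).add (hL2 j)).integrable_sq
      simpa using this
    have h2 := (hL2 i).integrable_sq
    have h3 := (hL2 j).integrable_sq
    have h4 := (((h1.sub h2).sub h3).const_mul (2⁻¹ : ℝ))
    convert h4 using 1
    funext x; simp only [Pi.sub_apply]; ring
  have hterm : ∀ (i j : Fin P) (c : ℝ),
      Integrable (fun x : Fin P → ℝ => x i * x j * c) μ :=
    fun i j c => (hmul i j).mul_const c
  have hpt : ∀ x : Fin P → ℝ,
      (∑ d, (∑ i, x i * B i d) ^ 2) =
        ∑ d, ∑ i, ∑ j, x i * x j * (B i d * B j d) := by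
    intro x
    refine Finset.sum_congr rfl fun d _ => ?_
    rw [sq, Finset.sum_mul_sum]
    exact Finset.sum_congr rfl fun i _ => Finset.sum_congr rfl fun j _ => by ring
  calc ∫ x, (∑ d, (∑ i, x i * B i d) ^ 2) ∂μ
      = ∫ x, (∑ d, ∑ i, ∑ j, x i * x j * (B i d * B j d)) ∂μ := by
        exact integral_congr_ae (Filter.Eventually.of_forall hpt)
    _ = ∑ d, ∑ i, ∑ j, ∫ x, x i * x j * (B i d * B j d) ∂μ := by
        rw [integral_finset_sum _ (fun d _ => integrable_finset_sum _
          (fun i _ => integrable_finset_sum _ (fun j _ => hterm i j _)))]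
        refine Finset.sum_congr rfl fun d _ => ?_
        rw [integral_finset_sum _ (fun i _ => integrable_finset_sum _
          (fun j _ => hterm i j _))]
        refine Finset.sum_congr rfl fun i _ => ?_
        exact integral_finset_sum _ (fun j _ => hterm i j _)
    _ = ∑ d, ∑ i, ∑ j, (if i = j then (1:ℝ) else 0) * (B i d * B j d) := by
        refine Finset.sum_congr rfl fun d _ => Finset.sum_congr rfl fun i _ =>
          Finset.sum_congr rfl fun j _ => ?_
        rw [integral_mul_const, hcov i j]
    _ = ∑ d, ∑ i, B i d ^ 2 := by
        refine Finset.sum_congr rfl fun d _ => Finset.sum_congr rfl fun i _ => ?_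
        simp [ite_mul, Finset.sum_ite_eq, sq]
    _ = frobNormSq B := Finset.sum_comm

/-- For a distribution with identity uncentered covariance:
(i) the expected squared embedding discrepancy `∫‖xθ − δ(xA)θ'‖² dμ` equals the squared
Frobenius norm `‖θ − δAθ'‖_F²`; (ii) a matrix minimizes the expected loss iff it
minimizes the Frobenius objective; and (iii) if the columns of `A` are linearly
independent, the unique minimizer of both objectives is `δ⁻¹(AᵀA)⁻¹Aᵀθ`. -/
theorem flex_projection_expected_loss
    (P P' D : ℕ) (hP : 0 < P) (hP' : 0 < P') (hD : 0 < D)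
    (μ : Measure (Fin P → ℝ)) [IsProbabilityMeasure μ]
    (hL2 : ∀ i : Fin P, MemLp (fun x : Fin P → ℝ => x i) 2 μ)
    (hcov : ∀ i j : Fin P, (∫ x, x i * x j ∂μ) = if i = j then (1 : ℝ) else 0)
    (A : Matrix (Fin P) (Fin P') ℝ)
    (δ : ℝ) (hδ : 0 < δ) (θ : Matrix (Fin P) (Fin D) ℝ) :
    (∀ θ' : Matrix (Fin P') (Fin D) ℝ,
        ∫ x, (∑ d, ((x ᵥ* θ) d - δ * (((x ᵥ* A) ᵥ* θ') d)) ^ 2) ∂μ =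
          frobNormSq (θ - δ • (A * θ'))) ∧
    (∀ θ' : Matrix (Fin P') (Fin D) ℝ,
        (∀ θ'' : Matrix (Fin P') (Fin D) ℝ,
            (∫ x, (∑ d, ((x ᵥ* θ) d - δ * (((x ᵥ* A) ᵥ* θ') d)) ^ 2) ∂μ) ≤
              ∫ x, (∑ d, ((x ᵥ* θ) d - δ * (((x ᵥ* A) ᵥ* θ'') d)) ^ 2) ∂μ) ↔
        (∀ θ'' : Matrix (Fin P') (Fin D) ℝ,
            frobNormSq (θ - δ • (A * θ')) ≤ frobNormSq (θ - δ • (A * θ'')))) ∧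
    (IsUnit (Aᵀ * A).det →
      ∀ θ' : Matrix (Fin P') (Fin D) ℝ,
        ((∀ θ'' : Matrix (Fin P') (Fin D) ℝ,
            (∫ x, (∑ d, ((x ᵥ* θ) d - δ * (((x ᵥ* A) ᵥ* θ') d)) ^ 2) ∂μ) ≤
              ∫ x, (∑ d, ((x ᵥ* θ) d - δ * (((x ᵥ* A) ᵥ* θ'') d)) ^ 2) ∂μ) ↔
          θ' = δ⁻¹ • ((Aᵀ * A)⁻¹ * Aᵀ * θ)) ∧
        ((∀ θ'' : Matrix (Fin P') (Fin D) ℝ,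
            frobNormSq (θ - δ • (A * θ')) ≤ frobNormSq (θ - δ • (A * θ''))) ↔
          θ' = δ⁻¹ • ((Aᵀ * A)⁻¹ * Aᵀ * θ))) := by
  
  have hpt : ∀ (θ' : Matrix (Fin P') (Fin D) ℝ) (x : Fin P → ℝ) (d : Fin D),
      (x ᵥ* θ) d - δ * (((x ᵥ* A) ᵥ* θ') d) = ∑ i, x i * (θ - δ • (A * θ')) i d := by
    intro θ' x d
    rw [Matrix.vecMul_vecMul]
    simp only [Matrix.vecMul, dotProduct, Matrix.sub_apply, Matrix.smul_apply,
      smul_eq_mul, mul_sub, Finset.mul_sum, Finset.sum_sub_distrib]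
    congr 1
    exact Finset.sum_congr rfl fun i _ => by ring
  have hi : ∀ θ' : Matrix (Fin P') (Fin D) ℝ,
      ∫ x, (∑ d, ((x ᵥ* θ) d - δ * (((x ᵥ* A) ᵥ* θ') d)) ^ 2) ∂μ =
        frobNormSq (θ - δ • (A * θ')) := by
    intro θ'
    have : ∀ x : Fin P → ℝ,
        (∑ d, ((x ᵥ* θ) d - δ * (((x ᵥ* A) ᵥ* θ') d)) ^ 2) =
          ∑ d, (∑ i, x i * (θ - δ • (A * θ')) i d) ^ 2 := by
      intro x
      exact Finset.sum_congr rfl fun d _ => by rw [hpt θ' x d]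
    rw [integral_congr_ae (Filter.Eventually.of_forall this)]
    exact integral_eq_frob μ hL2 hcov _
  refine ⟨hi, fun θ' => ?_, fun hA θ' => ?_⟩
  · constructor
    · intro h θ''
      rw [← hi θ', ← hi θ'']
      exact h θ''
    · intro h θ''
      rw [hi θ', hi θ'']
      exact h θ''
  · constructor
    · rw [show (∀ θ'' : Matrix (Fin P') (Fin D) ℝ,
          (∫ x, (∑ d, ((x ᵥ* θ) d - δ * (((x ᵥ* A) ᵥ* θ') d)) ^ 2) ∂μ) ≤
            ∫ x, (∑ d, ((x ᵥ* θ) d - δ * (((x ᵥ* A) ᵥ* θ'') d)) ^ 2) ∂μ) ↔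
          (∀ θ'' : Matrix (Fin P') (Fin D) ℝ,
            frobNormSq (θ - δ • (A * θ')) ≤ frobNormSq (θ - δ • (A * θ''))) from
        ⟨fun h θ'' => by rw [← hi θ', ← hi θ'']; exact h θ'',
         fun h θ'' => by rw [hi θ', hi θ'']; exact h θ''⟩]
      exact frob_min_iff A hA δ hδ θ θ'
    · exact frob_min_iff A hA δ hδ θ θ'
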